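/- For every real γ with 0 < γ ≤ 1, the optimistic Stackelberg value of the row player in the game G1 equals 16/γ, i.e., StackVal_1(G1) = 16/γ; it is attained when the row player commits to the pure strategy A, to which the column player's unique best response is C. -/
import Mathlib


/-!
Statement 3: For every real γ with 0 < γ ≤ 1, the optimistic Stackelberg value of the
row player in the game G1 equals 16/γ, attained when the row player commits to the pure
strategy A, to which the column player's unique best response is C.

Row actions: `0 = A`, `1 = B`.  Column actions: `0 = C`, `1 = D`.
-/

/-- A mixed strategy on a finite set: nonnegative and summing to 1. -/
def IsMixed {S : Type*} [Fintype S] (p : S → ℝ) : Prop :=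
  (∀ s, 0 ≤ p s) ∧ ∑ s, p s = 1

/-- Player 1's utilities in game `G1`. -/
noncomputable def U1G1 (γ : ℝ) : Fin 2 → Fin 2 → ℝ := ![![16 / γ, 16 / γ], ![2, 0]]

/-- Player 2's utilities in game `G1`. -/
noncomputable def U2G1 (γ : ℝ) : Fin 2 → Fin 2 → ℝ := ![![1, -32 / γ], ![0, 2]]

/-- Expected utility of utility matrix `U` when the row player plays the mixed strategy `x`
and the column player plays the pure action `y`. -/
noncomputable def evalCol (U : Fin 2 → Fin 2 → ℝ) (x : Fin 2 → ℝ) (y : Fin 2) : ℝ :=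
  ∑ a, x a * U a y

/-- The column player's pure best responses to the mixed row strategy `x`. -/
def colBR (U2 : Fin 2 → Fin 2 → ℝ) (x : Fin 2 → ℝ) : Set (Fin 2) :=
  {y | ∀ y', evalCol U2 x y' ≤ evalCol U2 x y}

/-- The optimistic Stackelberg value of the row player: the supremum over mixed row
strategies `x` of the maximum of the row player's utility over the column player's pure
best responses to `x` (ties broken in the row player's favor). -/
noncomputable def stackVal1 (U1 U2 : Fin 2 → Fin 2 → ℝ) : ℝ :=
  sSup {v | ∃ x, IsMixed x ∧
    IsGreatest {u | ∃ y ∈ colBR U2 x, u = evalCol U1 x y} v}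

/-- The pure row strategy `A`. -/
noncomputable def pureA : Fin 2 → ℝ := ![1, 0]

theorem stackVal1_G1_eq (γ : ℝ) (hγ0 : 0 < γ) (hγ1 : γ ≤ 1) :
    stackVal1 (U1G1 γ) (U2G1 γ) = 16 / γ ∧
    colBR (U2G1 γ) pureA = {(0 : Fin 2)} ∧
    IsGreatest {u | ∃ y ∈ colBR (U2G1 γ) pureA, u = evalCol (U1G1 γ) pureA y} (16 / γ) := by
  have h16 : (16:ℝ) ≤ 16 / γ := by
    rw [le_div_iff₀ hγ0]; nlinarith
  have hBR : colBR (U2G1 γ) pureA = {(0 : Fin 2)} := by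
    ext y
    simp only [colBR, Set.mem_setOf_eq, Set.mem_singleton_iff]
    constructor
    · intro h
      have := h 0
      fin_cases y
      · rfl
      · exfalso
        simp [evalCol, Fin.sum_univ_two, pureA, U2G1, neg_div] at this
        have h32 : (0:ℝ) < 32 / γ := by positivity
        linarith
    · rintro rfl y'
      fin_cases y'
      · simp
      · simp [evalCol, Fin.sum_univ_two, pureA, U2G1, neg_div]
        have h32 : (0:ℝ) < 32 / γ := by positivity
        linarith
  have hGr : IsGreatest {u | ∃ y ∈ colBR (U2G1 γ) pureA, u = evalCol (U1G1 γ) pureA y}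
      (16 / γ) := by
    constructor
    · exact ⟨0, by rw [hBR]; rfl, by simp [evalCol, Fin.sum_univ_two, pureA, U1G1]⟩
    · rintro u ⟨y, hy, rfl⟩
      rw [hBR] at hy
      rw [hy]
      simp [evalCol, Fin.sum_univ_two, pureA, U1G1]
  refine ⟨?_, hBR, hGr⟩
  have hub : ∀ v ∈ {v | ∃ x, IsMixed x ∧
      IsGreatest {u | ∃ y ∈ colBR (U2G1 γ) x, u = evalCol (U1G1 γ) x y} v}, v ≤ 16 / γ := by
    rintro v ⟨x, ⟨hx0, hx1⟩, ⟨⟨y, _, rfl⟩, _⟩⟩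
    have h0 := hx0 0
    have h1 := hx0 1
    have hsum : x 0 + x 1 = 1 := by simpa [Fin.sum_univ_two] using hx1
    fin_cases y <;>
      simp only [evalCol, Fin.sum_univ_two, U1G1, Fin.mk_zero, Fin.mk_one,
        Fin.isValue, Matrix.cons_val_zero, Matrix.cons_val_one, Matrix.head_cons] <;>
      nlinarith
  exact le_antisymm (Real.sSup_le hub (by positivity))
    (le_csSup ⟨16 / γ, hub⟩ ⟨pureA, ⟨by intro s; fin_cases s <;> simp [pureA],
      by simp [Fin.sum_univ_two, pureA]⟩, hGr⟩)
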